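/- The Taylor map g_0 : K → K[[X]], g_0(c) = Σ_i (∂^i(c)/i!)X^i, is a ring homomorphism satisfying ∂_X(g_0(c)) = g_0(∂(c)) for all c ∈ K, and for every s ∈ (0, r(K,∂)] and every c ∈ K one has sup_i |∂^i(c)/i!| s^i = |c| (in particular the supremum is finite). Consequently, for all i ∈ ℕ the additive map c ↦ ∂^i(c)/i! has operator norm at most 1/r(K,∂)^i. -/

import Mathlib

open scoped Classical
set_option linter.unusedSectionVars false
noncomputable section

namespace Ohkubo

/-- A derivation on a field: additive and satisfying the Leibniz rule. -/
structure IsDerivation {K : Type} [Field K] (d : K → K) : Prop where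
  map_add : ∀ x y : K, d (x + y) = d x + d y
  leibniz : ∀ x y : K, d (x * y) = d x * y + x * d y

/-- A map bounded for the norm. -/
def IsBoundedMap {K : Type} [NontriviallyNormedField K] (d : K → K) : Prop :=
  ∃ C : ℝ, ∀ x : K, ‖d x‖ ≤ C * ‖x‖

/-- Operator norm of a map with respect to a norm-like function `N`. -/
def opNormOn {V : Type} [Zero V] (N : V → ℝ) (f : V → V) : ℝ :=
  sSup {t : ℝ | ∃ v : V, v ≠ 0 ∧ t = N (f v) / N v}

/-- Spectral norm of a map with respect to a norm-like function `N`. -/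
def spNormOn {V : Type} [Zero V] (N : V → ℝ) (f : V → V) : ℝ :=
  sInf {t : ℝ | ∃ n : ℕ, 1 ≤ n ∧ t = (opNormOn N (f^[n])) ^ ((n : ℝ)⁻¹)}

/-- The residue characteristic `p(K)`: the unique prime `p` with `‖p‖ < 1`, if it exists,
and `0` otherwise. -/
def residueChar (K : Type) [NontriviallyNormedField K] : ℕ :=
  if h : ∃ p : ℕ, p.Prime ∧ ‖(p : K)‖ < 1 then h.choose else 0

/-- `ω(K) = |p(K)|^(1/(p(K)-1))` if `p(K) > 0`, and `1` otherwise. -/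
def omegaK (K : Type) [NontriviallyNormedField K] : ℝ :=
  if residueChar K = 0 then 1
  else ‖((residueChar K : ℕ) : K)‖ ^ (((residueChar K : ℝ) - 1)⁻¹)

/-- The spectral norm of a map `K → K`, computed with the norm of `K`. -/
def spNormK {K : Type} [NontriviallyNormedField K] (d : K → K) : ℝ :=
  spNormOn (fun x : K => ‖x‖) d

/-- `r(K,∂) = ω(K)/|∂|_sp`. -/
def radius {K : Type} [NontriviallyNormedField K] (d : K → K) : ℝ :=
  omegaK K / spNormK d

/-- The `i`-th term `‖a_i‖ s^i` entering the `s`-Gauss norm. -/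
def gaussTerm {K : Type} [NontriviallyNormedField K] (s : ℝ) (f : PowerSeries K) (i : ℕ) : ℝ :=
  ‖(PowerSeries.coeff (R := K) i) f‖ * s ^ i

/-- `|f|_s < ∞`. -/
def MemBd {K : Type} [NontriviallyNormedField K] (s : ℝ) (f : PowerSeries K) : Prop :=
  BddAbove (Set.range (gaussTerm s f))

/-- `K[[X/s]]_0`, the power series with bounded `s`-Gauss norm. -/
def bdRing (K : Type) [NontriviallyNormedField K] (s : ℝ) : Set (PowerSeries K) :=
  {f | MemBd s f}

/-- `K{X/r}`, the power series convergent on the open disc of radius `r`. -/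
def convRing (K : Type) [NontriviallyNormedField K] (r : ℝ) : Set (PowerSeries K) :=
  {f | ∀ s : ℝ, 0 < s → s < r → MemBd s f}

/-- The formal derivative `∂_X` of a power series. -/
def dX {K : Type} [Field K] (f : PowerSeries K) : PowerSeries K :=
  PowerSeries.mk fun i => ((i : K) + 1) * (PowerSeries.coeff (R := K) (i + 1)) f

/-- The Taylor map `g_0(c) = Σ_i (∂^i(c)/i!) X^i`. -/
def taylor {K : Type} [Field K] (d : K → K) (c : K) : PowerSeries K :=
  PowerSeries.mk fun i => d^[i] c / (i.factorial : K)

/-- A (nonarchimedean, multiplicatively compatible) norm on a `K`-vector space. -/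
def CompatNorm (K : Type) {V : Type} [NontriviallyNormedField K] [AddCommGroup V] [Module K V]
    (N : V → ℝ) : Prop :=
  (∀ v : V, 0 ≤ N v) ∧ (∀ v : V, N v = 0 ↔ v = 0) ∧
    (∀ x y : V, N (x + y) ≤ max (N x) (N y)) ∧
    ∀ (c : K) (v : V), N (c • v) = ‖c‖ * N v

/-- The spectral norm of `f` equals `c` (computed with any compatible norm; the value is
independent of the choice). -/
def HasSpNorm (K : Type) {V : Type} [NontriviallyNormedField K] [AddCommGroup V] [Module K V]
    (f : V → V) (c : ℝ) : Prop :=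
  ∃ N : V → ℝ, CompatNorm K N ∧ spNormOn N f = c

/-- A differential operator on `V` relative to the derivation `d`. -/
def IsDiffOp {K V : Type} [NontriviallyNormedField K] [AddCommGroup V] [Module K V]
    (d : K → K) (D : V → V) : Prop :=
  (∀ x y : V, D (x + y) = D x + D y) ∧ ∀ (c : K) (v : V), D (c • v) = d c • v + c • D v

/-- `(V, D)` is an irreducible differential module. -/
def IsIrred (K : Type) (V : Type) [NontriviallyNormedField K] [AddCommGroup V] [Module K V]
    (D : V → V) : Prop :=
  (∃ v : V, v ≠ 0) ∧ ∀ p : Submodule K V, (∀ x ∈ p, D x ∈ p) → p = ⊥ ∨ p = ⊤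

/-- `DW` is the operator induced by `D` on the subquotient `q ⧸ p`. -/
def InducedOn {K V : Type} [NontriviallyNormedField K] [AddCommGroup V] [Module K V]
    (D : V → V) (p q : Submodule K V)
    (DW : (↥q ⧸ p.comap q.subtype) → (↥q ⧸ p.comap q.subtype)) : Prop :=
  ∀ (x : V) (hx : x ∈ q) (hDx : D x ∈ q),
    DW (Submodule.Quotient.mk ⟨x, hx⟩) = Submodule.Quotient.mk ⟨D x, hDx⟩

/-- Every irreducible subquotient of `(V, D)` has spectral norm `c`. -/
def PureRadius (K : Type) (V : Type) [NontriviallyNormedField K] [AddCommGroup V] [Module K V]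
    (D : V → V) (c : ℝ) : Prop :=
  ∀ p q : Submodule K V, p ≤ q → (∀ x ∈ p, D x ∈ p) → (∀ x ∈ q, D x ∈ q) →
    ∀ DW : (↥q ⧸ p.comap q.subtype) → (↥q ⧸ p.comap q.subtype),
      InducedOn D p q DW → IsIrred K (↥q ⧸ p.comap q.subtype) DW → HasSpNorm K DW c

/-- `V_r`: the sum of all `D`-stable subspaces all of whose irreducible subquotients have
spectral norm `ω(K)/r`. -/
def pureSub (K : Type) {V : Type} [NontriviallyNormedField K] [AddCommGroup V] [Module K V]
    (D : V → V) (r : ℝ) : Submodule K V :=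
  sSup {p : Submodule K V | ∃ hp : ∀ x ∈ p, D x ∈ p,
    PureRadius K ↥p (fun y : ↥p => (⟨D y.1, hp y.1 y.2⟩ : ↥p)) (omegaK K / r)}

/-- `V_{r_J}`: the sum of all subspaces stable under all the `D j` all of whose irreducible
`D j`-subquotients have spectral norm `ω(K)/r_j`, for every `j`. -/
def pureSubFam (K : Type) {V J : Type} [NontriviallyNormedField K] [AddCommGroup V] [Module K V]
    (D : J → V → V) (rJ : J → ℝ) : Submodule K V :=
  sSup {p : Submodule K V | ∃ hp : ∀ (j : J), ∀ x ∈ p, D j x ∈ p,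
    ∀ j : J, PureRadius K ↥p (fun y : ↥p => (⟨D j y.1, hp j y.1 y.2⟩ : ↥p)) (omegaK K / rJ j)}

/-- A solution map: an additive map `V → K[[X]]` semilinear for the Taylor map and
intertwining `D` with `∂_X`. -/
def IsSolMap {K V : Type} [NontriviallyNormedField K] [AddCommGroup V] [Module K V]
    (d : K → K) (D : V → V) (s : V → PowerSeries K) : Prop :=
  (∀ x y : V, s (x + y) = s x + s y) ∧
    (∀ (c : K) (v : V), s (c • v) = taylor d c * s v) ∧
    ∀ v : V, s (D v) = dX (s v)

/-! ### Auxiliary lemmas -/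

section Aux

open PowerSeries Filter

variable {K : Type} [NontriviallyNormedField K] [CharZero K] {d : K → K}

lemma IsDerivation.map_zero (hd : IsDerivation d) : d 0 = 0 := by
  have := hd.map_add 0 0
  simp only [add_zero] at this
  exact (left_eq_add.mp this)

lemma IsDerivation.map_one (hd : IsDerivation d) : d 1 = 0 := by
  have := hd.leibniz 1 1
  simp only [mul_one, one_mul] at this
  exact (left_eq_add.mp this)

lemma iter_map_add (hd : IsDerivation d) (n : ℕ) (x y : K) :
    d^[n] (x + y) = d^[n] x + d^[n] y := by
  induction n generalizing x y with
  | zero => simp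
  | succ n ih =>
    simp only [Function.iterate_succ_apply, hd.map_add, ih]

lemma iter_map_zero (hd : IsDerivation d) (n : ℕ) : d^[n] 0 = 0 := by
  induction n with
  | zero => simp
  | succ n ih => simp [Function.iterate_succ_apply, hd.map_zero, ih]

lemma coeff_taylor (d : K → K) (c : K) (n : ℕ) :
    PowerSeries.coeff (R := K) n (taylor d c) = d^[n] c / (n.factorial : K) := by
  simp [taylor, coeff_mk]

lemma taylor_add (hd : IsDerivation d) (x y : K) :
    taylor d (x + y) = taylor d x + taylor d y := by
  ext n
  simp [coeff_taylor, iter_map_add hd, add_div]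

lemma taylor_one (hd : IsDerivation d) : taylor d (1 : K) = 1 := by
  ext n
  rw [coeff_taylor, PowerSeries.coeff_one]
  cases n with
  | zero => simp
  | succ n =>
    have : d^[n+1] (1 : K) = 0 := by
      rw [Function.iterate_succ_apply, hd.map_one, iter_map_zero hd]
    simp [this]

lemma factorial_cast_ne_zero (n : ℕ) : ((n.factorial : K)) ≠ 0 :=
  Nat.cast_ne_zero.mpr (Nat.factorial_ne_zero n)

lemma dX_eq_derivativeFun (f : PowerSeries K) : dX f = PowerSeries.derivativeFun f := by
  ext n
  simp [dX, coeff_mk, PowerSeries.derivativeFun, PowerSeries.coeff_derivative]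
  ring

lemma dX_taylor (hd : IsDerivation d) (c : K) : dX (taylor d c) = taylor d (d c) := by
  ext n
  rw [dX, coeff_mk, coeff_taylor, coeff_taylor]
  rw [Function.iterate_succ_apply]
  have h1 : ((n.factorial : K)) ≠ 0 := factorial_cast_ne_zero n
  have hne : ((n : K) + 1) ≠ 0 := Nat.cast_add_one_ne_zero (R := K) n
  rw [show (((n+1).factorial : ℕ) : K) = ((n : K) + 1) * (n.factorial : K) by
    rw [Nat.factorial_succ]; push_cast; ring]
  rw [div_mul_eq_div_div_swap, mul_comm, div_mul_cancel₀ _ hne]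

lemma taylor_mul (hd : IsDerivation d) (x y : K) :
    taylor d (x * y) = taylor d x * taylor d y := by
  have key : ∀ (c : K) (n : ℕ),
      ((n : K) + 1) * PowerSeries.coeff (R := K) (n+1) (taylor d c)
        = PowerSeries.coeff (R := K) n (taylor d (d c)) := by
    intro c n
    rw [← dX_taylor hd, dX, coeff_mk]
  ext n
  induction n generalizing x y with
  | zero =>
    rw [coeff_taylor, PowerSeries.coeff_mul]
    simp [coeff_taylor]
  | succ n ih =>
    have hne : ((n : K) + 1) ≠ 0 := by
      exact_mod_cast Nat.cast_add_one_ne_zero (R := K) n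
    have lhs : ((n : K) + 1) * PowerSeries.coeff (R := K) (n+1) (taylor d (x * y))
        = PowerSeries.coeff (R := K) n (taylor d (d x * y)) +
          PowerSeries.coeff (R := K) n (taylor d (x * d y)) := by
      rw [key, hd.leibniz, taylor_add hd, map_add]
    have rhs : ((n : K) + 1) * PowerSeries.coeff (R := K) (n+1) (taylor d x * taylor d y)
        = PowerSeries.coeff (R := K) n (taylor d (d x * y)) +
          PowerSeries.coeff (R := K) n (taylor d (x * d y)) := by
      have hprod : dX (taylor d x * taylor d y)
          = taylor d (d x) * taylor d y + taylor d x * taylor d (d y) := by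
        rw [dX_eq_derivativeFun, PowerSeries.derivativeFun_mul,
          ← dX_eq_derivativeFun, ← dX_eq_derivativeFun, dX_taylor hd, dX_taylor hd,
          smul_eq_mul, smul_eq_mul]
        ring
      have := congrArg (fun f => PowerSeries.coeff (R := K) n f) hprod
      simp only [map_add] at this
      rw [ih (d x) y, ih x (d y)]
      calc ((n : K) + 1) * PowerSeries.coeff (R := K) (n+1) (taylor d x * taylor d y)
          = PowerSeries.coeff (R := K) n (dX (taylor d x * taylor d y)) := by
            rw [dX, coeff_mk]
        _ = PowerSeries.coeff (R := K) n (taylor d (d x) * taylor d y)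
            + PowerSeries.coeff (R := K) n (taylor d x * taylor d (d y)) := this
    exact mul_left_cancel₀ hne (lhs.trans rhs.symm)

section Norms

variable (hna : IsNonarchimedean fun x : K => ‖x‖)
include hna

lemma norm_natCast_le_one (n : ℕ) : ‖(n : K)‖ ≤ 1 := by
  induction n with
  | zero => simp
  | succ n ih =>
    have := hna (n : K) 1
    push_cast
    refine le_trans this ?_
    simp [ih]

lemma norm_intCast_le_one (a : ℤ) : ‖(a : K)‖ ≤ 1 := by
  rcases le_or_gt 0 a with h | h
  · lift a to ℕ using h
    exact_mod_cast norm_natCast_le_one hna a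
  · have : ((a : K)) = -(((-a).toNat : ℕ) : K) := by
      have h1 : (((-a).toNat : ℤ)) = -a := Int.toNat_of_nonneg (by omega)
      have := congrArg (fun z : ℤ => (z : K)) h1
      push_cast at this
      rw [this]; ring
    rw [this, norm_neg]
    exact norm_natCast_le_one hna _

lemma norm_prime_eq_one {p q : ℕ} (hp : p.Prime) (hq : q.Prime) (hpq : p ≠ q)
    (h1 : ‖(p : K)‖ < 1) : ‖(q : K)‖ = 1 := by
  have hqle : ‖(q : K)‖ ≤ 1 := norm_natCast_le_one hna q
  rcases lt_or_eq_of_le hqle with hlt | heq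
  · exfalso
    have hco : Nat.Coprime p q := (Nat.coprime_primes hp hq).mpr hpq
    obtain ⟨u, v, huv⟩ := Nat.isCoprime_iff_coprime.mpr hco
    have hK : (u : K) * (p : K) + (v : K) * (q : K) = 1 := by
      have := congrArg (fun z : ℤ => (z : K)) huv
      push_cast at this
      simpa using this
    have hb1 : ‖(u : K) * (p : K)‖ < 1 := by
      rw [norm_mul]
      calc ‖(u : K)‖ * ‖(p : K)‖ ≤ 1 * ‖(p : K)‖ :=
            mul_le_mul_of_nonneg_right (norm_intCast_le_one hna u) (norm_nonneg _)
        _ = ‖(p : K)‖ := one_mul _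
        _ < 1 := h1
    have hb2 : ‖(v : K) * (q : K)‖ < 1 := by
      rw [norm_mul]
      calc ‖(v : K)‖ * ‖(q : K)‖ ≤ 1 * ‖(q : K)‖ :=
            mul_le_mul_of_nonneg_right (norm_intCast_le_one hna v) (norm_nonneg _)
        _ = ‖(q : K)‖ := one_mul _
        _ < 1 := hlt
    have : ‖(1 : K)‖ < 1 := by
      rw [← hK]
      exact lt_of_le_of_lt (hna _ _) (max_lt hb1 hb2)
    simp at this
  · exact heq

lemma norm_nat_eq_one_of_ne {p : ℕ} (hp : p.Prime) (h1 : ‖(p : K)‖ < 1)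
    {m : ℕ} (hm : m ≠ 0) (hdvd : ¬ p ∣ m) : ‖(m : K)‖ = 1 := by
  induction m using Nat.recOnMul with
  | zero => exact absurd rfl hm
  | one => simp
  | prime q hq =>
    exact norm_prime_eq_one hna hp hq (by rintro rfl; exact hdvd dvd_rfl) h1
  | mul a b ha hb =>
    have hab : a ≠ 0 ∧ b ≠ 0 := by
      constructor <;> rintro rfl <;> simp at hm
    have hda : ¬ p ∣ a := fun h => hdvd (h.mul_right b)
    have hdb' : ¬ p ∣ b := fun h => hdvd (h.mul_left a)
    push_cast
    rw [norm_mul, ha hab.1 hda, hb hab.2 hdb', one_mul]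

lemma norm_nat_factorization {p : ℕ} (hp : p.Prime) (h1 : ‖(p : K)‖ < 1)
    {m : ℕ} (hm : m ≠ 0) : ‖(m : K)‖ = ‖(p : K)‖ ^ (m.factorization p) := by
  induction m using Nat.recOnMul with
  | zero => exact absurd rfl hm
  | one => simp
  | prime q hq =>
    by_cases hqp : q = p
    · subst hqp
      rw [hq.factorization_self]
      simp
    · rw [norm_prime_eq_one hna hp hq (fun h => hqp h.symm) h1]
      rw [hq.factorization]
      rw [Finsupp.single_apply, if_neg hqp, pow_zero]
  | mul a b ha hb =>
    have hab : a ≠ 0 ∧ b ≠ 0 := by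
      constructor <;> rintro rfl <;> simp at hm
    rw [Nat.factorization_mul hab.1 hab.2, Finsupp.add_apply, pow_add]
    push_cast
    rw [norm_mul, ha hab.1, hb hab.2]

end Norms

section Omega

variable (K)
variable (hna : IsNonarchimedean fun x : K => ‖x‖)
include hna

lemma omega_facts :
    0 < omegaK K ∧ omegaK K ≤ 1 ∧ ∀ n : ℕ, omegaK K ^ n ≤ ‖((n.factorial : ℕ) : K)‖ := by
  by_cases h : ∃ p : ℕ, p.Prime ∧ ‖(p : K)‖ < 1
  · have hrc : residueChar K = h.choose := by
      rw [residueChar, dif_pos h]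
    obtain ⟨hp, hp1⟩ := h.choose_spec
    set p := h.choose with hpdef
    have hp0 : (0 : ℝ) < ‖(p : K)‖ := by
      have : ((p : ℕ) : K) ≠ 0 := Nat.cast_ne_zero.mpr hp.ne_zero
      simpa using norm_pos_iff.mpr this
    have hom : omegaK K = ‖(p : K)‖ ^ (((p : ℝ) - 1)⁻¹) := by
      rw [omegaK, if_neg (by rw [hrc]; exact hp.ne_zero), hrc]
    have hexp : (0 : ℝ) ≤ ((p : ℝ) - 1)⁻¹ := by
      have : (2 : ℝ) ≤ (p : ℝ) := by exact_mod_cast hp.two_le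
      have : (0 : ℝ) ≤ (p : ℝ) - 1 := by linarith
      positivity
    refine ⟨?_, ?_, ?_⟩
    · rw [hom]; exact Real.rpow_pos_of_pos hp0 _
    · rw [hom]; exact Real.rpow_le_one (le_of_lt hp0) (le_of_lt hp1) hexp
    · intro n
      haveI : Fact p.Prime := ⟨hp⟩
      have hfac : ((n.factorial).factorization p : ℝ) ≤ (n : ℝ) * ((p : ℝ) - 1)⁻¹ := by
        have hleg : (p - 1) * padicValNat p (n.factorial) ≤ n := by
          rw [sub_one_mul_padicValNat_factorial]
          exact Nat.sub_le _ _
        rw [Nat.factorization_def _ hp]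
        have hp2 : 2 ≤ p := hp.two_le
        have hps : (0 : ℝ) < (p : ℝ) - 1 := by
          have : (2 : ℝ) ≤ (p : ℝ) := by exact_mod_cast hp2
          linarith
        rw [show (n : ℝ) * ((p : ℝ) - 1)⁻¹ = (n : ℝ) / ((p : ℝ) - 1) by ring,
          le_div_iff₀ hps]
        have hcast : ((p - 1 : ℕ) : ℝ) = (p : ℝ) - 1 := by
          have h1 : 1 ≤ p := hp.one_lt.le
          push_cast [Nat.cast_sub h1]
          ring
        calc (padicValNat p (n.factorial) : ℝ) * ((p : ℝ) - 1)
            = (((p - 1) * padicValNat p (n.factorial) : ℕ) : ℝ) := by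
              push_cast [hcast]; ring
          _ ≤ (n : ℝ) := by exact_mod_cast hleg
      have hnorm : ‖((n.factorial : ℕ) : K)‖
          = ‖(p : K)‖ ^ ((n.factorial).factorization p) :=
        norm_nat_factorization hna hp hp1 (Nat.factorial_ne_zero n)
      rw [hnorm, hom]
      rw [← Real.rpow_natCast (‖(p : K)‖ ^ (((p : ℝ) - 1)⁻¹)) n, ← Real.rpow_natCast ‖(p : K)‖,
        ← Real.rpow_mul hp0.le]
      exact Real.rpow_le_rpow_of_exponent_ge hp0 hp1.le (by
        rw [mul_comm]; exact hfac)
  · have hrc : residueChar K = 0 := by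
      rw [residueChar, dif_neg h]
    have hom : omegaK K = 1 := by rw [omegaK, if_pos hrc]
    have hone : ∀ m : ℕ, m ≠ 0 → ‖(m : K)‖ = 1 := by
      intro m hm
      induction m using Nat.recOnMul with
      | zero => exact absurd rfl hm
      | one => simp
      | prime q hq =>
        have hle : ‖(q : K)‖ ≤ 1 := norm_natCast_le_one hna q
        rcases lt_or_eq_of_le hle with hlt | heq
        · exact absurd ⟨q, hq, hlt⟩ h
        · exact heq
      | mul a b ha hb =>
        have hab : a ≠ 0 ∧ b ≠ 0 := by
          constructor <;> rintro rfl <;> simp at hm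
        push_cast
        rw [norm_mul, ha hab.1, hb hab.2, one_mul]
    exact ⟨by rw [hom]; norm_num, by rw [hom],
      fun n => by rw [hom, one_pow, hone _ (Nat.factorial_ne_zero n)]⟩

end Omega

section OpNorm

/-- The operator norm of the `n`-th iterate of `d`. -/
def opN (d : K → K) (n : ℕ) : ℝ := opNormOn (fun x : K => ‖x‖) (d^[n])

/-- The defining set of `opN`. -/
def opSet (d : K → K) (n : ℕ) : Set ℝ :=
  {t : ℝ | ∃ v : K, v ≠ 0 ∧ t = ‖d^[n] v‖ / ‖v‖}

lemma opN_eq (d : K → K) (n : ℕ) : opN d n = sSup (opSet d n) := rfl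

variable (hd : IsDerivation d) (hdb : IsBoundedMap d)

include hdb in
lemma exists_growth_bound : ∃ C : ℝ, 0 ≤ C ∧ ∀ (n : ℕ) (x : K), ‖d^[n] x‖ ≤ C ^ n * ‖x‖ := by
  obtain ⟨C, hC⟩ := hdb
  refine ⟨max C 0, le_max_right _ _, ?_⟩
  intro n
  induction n with
  | zero => intro x; simp
  | succ n ih =>
    intro x
    rw [Function.iterate_succ_apply']
    calc ‖d (d^[n] x)‖ ≤ C * ‖d^[n] x‖ := hC _
      _ ≤ max C 0 * ‖d^[n] x‖ :=
          mul_le_mul_of_nonneg_right (le_max_left _ _) (norm_nonneg _)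
      _ ≤ max C 0 * (max C 0 ^ n * ‖x‖) :=
          mul_le_mul_of_nonneg_left (ih x) (le_max_right _ _)
      _ = max C 0 ^ (n + 1) * ‖x‖ := by ring

lemma opSet_nonempty (d : K → K) (n : ℕ) : (opSet d n).Nonempty :=
  ⟨‖d^[n] 1‖ / ‖(1 : K)‖, 1, one_ne_zero, rfl⟩

include hdb in
lemma opSet_bddAbove (n : ℕ) : BddAbove (opSet d n) := by
  obtain ⟨C, hC0, hC⟩ := exists_growth_bound hdb
  refine ⟨C ^ n, ?_⟩
  rintro t ⟨v, hv, rfl⟩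
  have hvn : (0 : ℝ) < ‖v‖ := norm_pos_iff.mpr hv
  rw [div_le_iff₀ hvn]
  exact hC n v

include hdb in
lemma opN_nonneg (n : ℕ) : 0 ≤ opN d n := by
  have h1 : ‖d^[n] 1‖ / ‖(1 : K)‖ ∈ opSet d n := ⟨1, one_ne_zero, rfl⟩
  have := le_csSup (opSet_bddAbove hdb n) h1
  exact le_trans (div_nonneg (norm_nonneg _) (norm_nonneg _)) this

include hd hdb in
lemma opN_spec (n : ℕ) (v : K) : ‖d^[n] v‖ ≤ opN d n * ‖v‖ := by
  by_cases hv : v = 0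
  · subst hv
    rw [iter_map_zero hd n]
    simp
  · have hvn : (0 : ℝ) < ‖v‖ := norm_pos_iff.mpr hv
    have hmem : ‖d^[n] v‖ / ‖v‖ ∈ opSet d n := ⟨v, hv, rfl⟩
    have := le_csSup (opSet_bddAbove hdb n) hmem
    rw [opN_eq]
    calc ‖d^[n] v‖ = ‖d^[n] v‖ / ‖v‖ * ‖v‖ := by field_simp
      _ ≤ sSup (opSet d n) * ‖v‖ := mul_le_mul_of_nonneg_right this hvn.le

include hd hdb in
lemma opN_chain (n : ℕ) : ∀ (q r : ℕ) (v : K),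
    ‖d^[n * q + r] v‖ ≤ opN d n ^ q * opN d 1 ^ r * ‖v‖ := by
  intro q
  induction q with
  | zero =>
    intro r
    induction r with
    | zero => intro v; simp
    | succ r ihr =>
      intro v
      have : n * 0 + (r + 1) = (n * 0 + r) + 1 := by ring
      rw [this, Function.iterate_succ_apply]
      calc ‖d^[n * 0 + r] (d v)‖ ≤ opN d n ^ 0 * opN d 1 ^ r * ‖d v‖ := ihr (d v)
        _ ≤ opN d n ^ 0 * opN d 1 ^ r * (opN d 1 * ‖v‖) := by
            refine mul_le_mul_of_nonneg_left ?_
              (mul_nonneg (pow_nonneg (opN_nonneg hdb n) _) (pow_nonneg (opN_nonneg hdb 1) _))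
            have := opN_spec hd hdb 1 v
            simpa using this
        _ = opN d n ^ 0 * opN d 1 ^ (r + 1) * ‖v‖ := by ring
  | succ q ihq =>
    intro r v
    have : n * (q + 1) + r = (n * q + r) + n := by ring
    rw [this, Function.iterate_add_apply]
    calc ‖d^[n * q + r] (d^[n] v)‖ ≤ opN d n ^ q * opN d 1 ^ r * ‖d^[n] v‖ := ihq r _
      _ ≤ opN d n ^ q * opN d 1 ^ r * (opN d n * ‖v‖) := by
          refine mul_le_mul_of_nonneg_left (opN_spec hd hdb n v)
            (mul_nonneg (pow_nonneg (opN_nonneg hdb n) _) (pow_nonneg (opN_nonneg hdb 1) _))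
      _ = opN d n ^ (q + 1) * opN d 1 ^ r * ‖v‖ := by ring

/-- The defining set of the spectral norm. -/
def spSet (d : K → K) : Set ℝ :=
  {t : ℝ | ∃ n : ℕ, 1 ≤ n ∧ t = (opN d n) ^ ((n : ℝ)⁻¹)}

lemma spNormK_eq (d : K → K) : spNormK d = sInf (spSet d) := rfl

lemma spSet_nonempty (d : K → K) : (spSet d).Nonempty :=
  ⟨(opN d 1) ^ ((1 : ℝ)⁻¹), 1, le_refl 1, by norm_num⟩

include hdb in
lemma spSet_bddBelow : BddBelow (spSet d) := by
  refine ⟨0, ?_⟩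
  rintro t ⟨n, hn, rfl⟩
  exact Real.rpow_nonneg (opN_nonneg hdb n) _

include hdb in
lemma spNormK_nonneg : 0 ≤ spNormK d := by
  rw [spNormK_eq]
  refine le_csInf (spSet_nonempty d) ?_
  rintro t ⟨n, hn, rfl⟩
  exact Real.rpow_nonneg (opN_nonneg hdb n) _

include hdb in
lemma exists_good_exponent {ε : ℝ} (hε : 0 < ε) :
    ∃ n : ℕ, 1 ≤ n ∧ opN d n < (spNormK d + ε) ^ n := by
  have hlt : sInf (spSet d) < spNormK d + ε := by
    rw [← spNormK_eq]; linarith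
  obtain ⟨t, ⟨n, hn, rfl⟩, hlt'⟩ :=
    (csInf_lt_iff (spSet_bddBelow hdb) (spSet_nonempty d)).mp hlt
  refine ⟨n, hn, ?_⟩
  have hn0 : n ≠ 0 := by omega
  have hop : 0 ≤ opN d n := opN_nonneg hdb n
  have hsp : 0 ≤ (opN d n) ^ ((n : ℝ)⁻¹) := Real.rpow_nonneg hop _
  calc opN d n = ((opN d n) ^ ((n : ℝ)⁻¹)) ^ n := (Real.rpow_inv_natCast_pow hop hn0).symm
    _ < (spNormK d + ε) ^ n := by
        exact pow_lt_pow_left₀ hlt' hsp hn0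

end OpNorm

section Analytic

variable (hna : IsNonarchimedean fun x : K => ‖x‖)
  (hd : IsDerivation d) (hdb : IsBoundedMap d)

include hna hd hdb in
lemma terms_tendsto {s : ℝ} (hs : 0 < s) (hsp : s * spNormK d < omegaK K) (c : K) :
    Filter.Tendsto (fun k : ℕ => ‖d^[k] c / (k.factorial : K)‖ * s ^ k)
      Filter.atTop (nhds 0) := by
  obtain ⟨hω0, hω1, hωfac⟩ := omega_facts K hna
  set ω := omegaK K with hωdef
  set sp := spNormK d with hspdef
  have hsp0 : 0 ≤ sp := spNormK_nonneg hdb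
  set ε : ℝ := (ω - s * sp) / (2 * s) with hεdef
  have hε : 0 < ε := by
    apply div_pos (by linarith) (by linarith)
  have hspε : 0 < sp + ε := by linarith
  have hθnum : (sp + ε) * s < ω := by
    have hεs : ε * s = (ω - s * sp) / 2 := by
      rw [hεdef]; field_simp
    nlinarith [hεs]
  set θ : ℝ := (sp + ε) * s / ω with hθdef
  have hθ0 : 0 ≤ θ := div_nonneg (by positivity) hω0.le
  have hθ1 : θ < 1 := (div_lt_one hω0).mpr hθnum
  obtain ⟨n, hn1, hngood⟩ := exists_good_exponent hdb hε
  set B : ℝ := opN d 1 with hBdef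
  have hB0 : 0 ≤ B := opN_nonneg hdb 1
  set C0 : ℝ := (max (sp + ε)⁻¹ 1) ^ n * (max B 1) ^ n with hC0def
  have hC00 : 0 ≤ C0 := by positivity
  have key : ∀ k : ℕ, ‖d^[k] c / (k.factorial : K)‖ * s ^ k ≤ C0 * ‖c‖ * θ ^ k := by
    intro k
    set q := k / n with hqdef
    set r := k % n with hrdef
    have hk : n * q + r = k := Nat.div_add_mod k n
    have hrn : r ≤ n := le_of_lt (Nat.mod_lt k (by omega))
    have h1 : ‖d^[k] c‖ ≤ opN d n ^ q * B ^ r * ‖c‖ := by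
      rw [← hk]; exact opN_chain hd hdb n q r c
    have h2 : opN d n ^ q ≤ ((sp + ε) ^ n) ^ q :=
      pow_le_pow_left₀ (opN_nonneg hdb n) hngood.le q
    have h3 : ((sp + ε) ^ n) ^ q = (sp + ε) ^ k * ((sp + ε)⁻¹) ^ r := by
      rw [← pow_mul, ← hk, pow_add, mul_assoc, ← mul_pow, mul_inv_cancel₀ hspε.ne']
      simp
    have h4 : ((sp + ε)⁻¹) ^ r ≤ (max (sp + ε)⁻¹ 1) ^ n :=
      le_trans (pow_le_pow_left₀ (by positivity) (le_max_left _ _) r)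
        (pow_le_pow_right₀ (le_max_right _ _) hrn)
    have h5 : B ^ r ≤ (max B 1) ^ n :=
      le_trans (pow_le_pow_left₀ hB0 (le_max_left _ _) r)
        (pow_le_pow_right₀ (le_max_right _ _) hrn)
    have hiter : ‖d^[k] c‖ ≤ (sp + ε) ^ k * C0 * ‖c‖ := by
      calc ‖d^[k] c‖ ≤ opN d n ^ q * B ^ r * ‖c‖ := h1
        _ ≤ ((sp + ε) ^ k * ((sp + ε)⁻¹) ^ r) * B ^ r * ‖c‖ := by
            refine mul_le_mul_of_nonneg_right (mul_le_mul_of_nonneg_right ?_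
              (pow_nonneg hB0 _)) (norm_nonneg _)
            exact le_trans h2 (le_of_eq h3)
        _ ≤ ((sp + ε) ^ k * (max (sp + ε)⁻¹ 1) ^ n) * (max B 1) ^ n * ‖c‖ := by
            refine mul_le_mul_of_nonneg_right ?_ (norm_nonneg _)
            refine mul_le_mul ?_ h5 (pow_nonneg hB0 _) (by positivity)
            exact mul_le_mul_of_nonneg_left h4 (by positivity)
        _ = (sp + ε) ^ k * C0 * ‖c‖ := by rw [hC0def]; ring
    have hfack : ω ^ k ≤ ‖((k.factorial : ℕ) : K)‖ := hωfac k
    have hfac0 : (0 : ℝ) < ω ^ k := pow_pos hω0 k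
    have hdiv : ‖d^[k] c / (k.factorial : K)‖ ≤ ‖d^[k] c‖ / ω ^ k := by
      rw [norm_div]
      exact div_le_div_of_nonneg_left (norm_nonneg _) hfac0 hfack
    calc ‖d^[k] c / (k.factorial : K)‖ * s ^ k ≤ (‖d^[k] c‖ / ω ^ k) * s ^ k :=
          mul_le_mul_of_nonneg_right hdiv (pow_nonneg hs.le k)
      _ ≤ (((sp + ε) ^ k * C0 * ‖c‖) / ω ^ k) * s ^ k := by gcongr
      _ = C0 * ‖c‖ * θ ^ k := by
          rw [hθdef, div_pow, mul_pow]
          field_simp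
  have hgoal0 : Filter.Tendsto (fun k : ℕ => C0 * ‖c‖ * θ ^ k) Filter.atTop (nhds 0) := by
    have := (tendsto_pow_atTop_nhds_zero_of_lt_one hθ0 hθ1).const_mul (C0 * ‖c‖)
    simpa using this
  exact squeeze_zero (fun k => mul_nonneg (norm_nonneg _) (pow_nonneg hs.le k)) key hgoal0

lemma exists_argmax (T : ℕ → ℝ) (h0 : 0 < T 0)
    (hlim : Filter.Tendsto T Filter.atTop (nhds 0)) :
    ∃ i : ℕ, (∀ k, T k ≤ T i) ∧ (∀ k, i < k → T k < T i) := by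
  have hev : ∀ᶠ k in Filter.atTop, T k < T 0 := hlim.eventually_lt_const h0
  obtain ⟨N0, hN⟩ := Filter.eventually_atTop.mp hev
  set N := N0 + 1 with hNdef
  have hNmem : (0 : ℕ) ∈ Finset.range N := by simp [hNdef]
  obtain ⟨b, hbmem, hbmax⟩ := Finset.exists_max_image (Finset.range N) T ⟨0, hNmem⟩
  set S := (Finset.range N).filter (fun k => T b ≤ T k) with hSdef
  have hSne : S.Nonempty := ⟨b, Finset.mem_filter.mpr ⟨hbmem, le_refl _⟩⟩
  set i := S.max' hSne with hidef
  have hiS : i ∈ S := S.max'_mem hSne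
  obtain ⟨hiN, hbi⟩ := Finset.mem_filter.mp hiS
  have hib : T i ≤ T b := hbmax i hiN
  have hTi : T b = T i := le_antisymm hbi hib
  have h0b : T 0 ≤ T b := hbmax 0 hNmem
  refine ⟨i, ?_, ?_⟩
  · intro k
    by_cases hk : k < N
    · exact le_trans (hbmax k (Finset.mem_range.mpr hk)) hbi
    · push_neg at hk
      have : T k < T 0 := hN k (by omega)
      linarith
  · intro k hik
    by_cases hk : k < N
    · rcases lt_or_ge (T k) (T b) with h | h
      · linarith
      · exfalso
        have hkS : k ∈ S := Finset.mem_filter.mpr ⟨Finset.mem_range.mpr hk, h⟩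
        have := S.le_max' k hkS
        omega
    · push_neg at hk
      have : T k < T 0 := hN k (by omega)
      linarith

include hna in
lemma nonarch_sum_lt {α : Type*} (s : Finset α) (f : α → K) {D : ℝ} (hD : 0 < D)
    (h : ∀ a ∈ s, ‖f a‖ < D) : ‖∑ a ∈ s, f a‖ < D := by
  classical
  induction s using Finset.induction_on with
  | empty => simpa using hD
  | @insert a t hx ih =>
    rw [Finset.sum_insert hx]
    refine lt_of_le_of_lt (hna _ _) (max_lt (h a (Finset.mem_insert_self a t)) ?_)
    exact ih (fun x hxt => h x (Finset.mem_insert_of_mem hxt))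

include hna hd hdb in
lemma main_bound {s : ℝ} (hs : 0 < s) (hsp : s * spNormK d < omegaK K) (c : K) (k : ℕ) :
    ‖d^[k] c / (k.factorial : K)‖ * s ^ k ≤ ‖c‖ := by
  by_cases hc : c = 0
  · subst hc
    rw [iter_map_zero hd]
    simp
  have hcpos : 0 < ‖c‖ := norm_pos_iff.mpr hc
  have hc' : c⁻¹ ≠ 0 := inv_ne_zero hc
  have hcpos' : 0 < ‖c⁻¹‖ := norm_pos_iff.mpr hc'
  set F := taylor d c with hFdef
  set G := taylor d c⁻¹ with hGdef
  set Tf : ℕ → ℝ := fun m => ‖PowerSeries.coeff (R := K) m F‖ * s ^ m with hTf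
  set Tg : ℕ → ℝ := fun m => ‖PowerSeries.coeff (R := K) m G‖ * s ^ m with hTg
  have hTfeq : ∀ m, Tf m = ‖d^[m] c / (m.factorial : K)‖ * s ^ m := by
    intro m; rw [hTf]; simp only [hFdef, coeff_taylor]
  have hTgeq : ∀ m, Tg m = ‖d^[m] c⁻¹ / (m.factorial : K)‖ * s ^ m := by
    intro m; rw [hTg]; simp only [hGdef, coeff_taylor]
  have hTf0 : Tf 0 = ‖c‖ := by rw [hTfeq]; simp
  have hTg0 : Tg 0 = ‖c⁻¹‖ := by rw [hTgeq]; simp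
  have hTflim : Filter.Tendsto Tf Filter.atTop (nhds 0) := by
    have := terms_tendsto hna hd hdb hs hsp c
    apply this.congr
    intro m; rw [hTfeq]
  have hTglim : Filter.Tendsto Tg Filter.atTop (nhds 0) := by
    have := terms_tendsto hna hd hdb hs hsp c⁻¹
    apply this.congr
    intro m; rw [hTgeq]
  obtain ⟨i, hiub, hist⟩ := exists_argmax Tf (by rw [hTf0]; exact hcpos) hTflim
  obtain ⟨j, hjub, hjst⟩ := exists_argmax Tg (by rw [hTg0]; exact hcpos') hTglim
  have hTfi : 0 < Tf i := lt_of_lt_of_le (by rw [hTf0]; exact hcpos) (hiub 0)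
  have hTgj : 0 < Tg j := lt_of_lt_of_le (by rw [hTg0]; exact hcpos') (hjub 0)
  -- claim : i = 0
  have hij : i = 0 := by
    by_contra hi0
    have hijne : i + j ≠ 0 := by omega
    have hFG : F * G = 1 := by
      rw [hFdef, hGdef, ← taylor_mul hd, mul_inv_cancel₀ hc, taylor_one hd]
    have hcoeff : PowerSeries.coeff (R := K) (i + j) (F * G) = 0 := by
      rw [hFG, PowerSeries.coeff_one, if_neg hijne]
    rw [PowerSeries.coeff_mul] at hcoeff
    have hmem : ((i, j) : ℕ × ℕ) ∈ Finset.HasAntidiagonal.antidiagonal (i + j) := by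
      simp
    rw [← Finset.add_sum_erase _ _ hmem] at hcoeff
    set a := PowerSeries.coeff (R := K) i F with hadef
    set b := PowerSeries.coeff (R := K) j G with hbdef
    have habpos : 0 < ‖a * b‖ := by
      rw [norm_mul]
      have ha : 0 < ‖a‖ := by
        have h1 : 0 < ‖a‖ * s ^ i := hTfi
        by_contra hcon
        push_neg at hcon
        nlinarith [pow_pos hs i, norm_nonneg a]
      have hb : 0 < ‖b‖ := by
        have h1 : 0 < ‖b‖ * s ^ j := hTgj
        by_contra hcon
        push_neg at hcon
        nlinarith [pow_pos hs j, norm_nonneg b]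
      exact mul_pos ha hb
    have hrest : ‖∑ p ∈ (Finset.HasAntidiagonal.antidiagonal (i + j)).erase (i, j),
        PowerSeries.coeff (R := K) p.1 F * PowerSeries.coeff (R := K) p.2 G‖ < ‖a * b‖ := by
      refine nonarch_sum_lt hna _ _ habpos ?_
      rintro ⟨k, l⟩ hkl
      have hklne : (k, l) ≠ (i, j) := Finset.ne_of_mem_erase hkl
      have hklsum : k + l = i + j :=
        Finset.HasAntidiagonal.mem_antidiagonal.mp (Finset.mem_of_mem_erase hkl)
      have hspow : (0 : ℝ) < s ^ (i + j) := pow_pos hs _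
      have hTlt : Tf k * Tg l < Tf i * Tg j := by
        rcases lt_trichotomy k i with hki | hki | hki
        · have hlj : j < l := by omega
          calc Tf k * Tg l ≤ Tf i * Tg l :=
                mul_le_mul_of_nonneg_right (hiub k)
                  (mul_nonneg (norm_nonneg _) (pow_nonneg hs.le _))
            _ < Tf i * Tg j := mul_lt_mul_of_pos_left (hjst l hlj) hTfi
        · exfalso; apply hklne; rw [hki]; congr 1; omega
        · have hflt : Tf k < Tf i := hist k hki
          calc Tf k * Tg l ≤ Tf k * Tg j :=
                mul_le_mul_of_nonneg_left (hjub l)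
                  (mul_nonneg (norm_nonneg _) (pow_nonneg hs.le _))
            _ < Tf i * Tg j := mul_lt_mul_of_pos_right hflt hTgj
      have hTfTg : Tf k * Tg l = ‖PowerSeries.coeff (R := K) k F * PowerSeries.coeff (R := K) l G‖
          * s ^ (i + j) := by
        rw [hTf, hTg, norm_mul, ← hklsum, pow_add]; ring
      have hab : Tf i * Tg j = ‖a * b‖ * s ^ (i + j) := by
        rw [hTf, hTg, norm_mul, pow_add, hadef, hbdef]; ring
      rw [hTfTg, hab] at hTlt
      exact lt_of_mul_lt_mul_right hTlt hspow.le
    have hab0 : a * b = -(∑ p ∈ (Finset.HasAntidiagonal.antidiagonal (i + j)).erase (i, j),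
        PowerSeries.coeff (R := K) p.1 F * PowerSeries.coeff (R := K) p.2 G) := by
      linear_combination hcoeff
    rw [hab0, norm_neg] at hrest
    exact lt_irrefl _ hrest
  have hk := hiub k
  rw [hij, hTf0] at hk
  rw [← hTfeq k]
  exact hk

end Analytic

end Aux

/-- The Taylor map `g₀` is a ring homomorphism intertwining `∂` and `∂_X`,
it is isometric for every `s`-Gauss norm with `s ∈ (0, r(K,∂)]`, and consequently
`‖∂^i(c)/i!‖ ≤ ‖c‖ / r(K,∂)^i` for all `i`. -/
theorem taylor_ring_hom_and_isometry
    (K : Type) [NontriviallyNormedField K] [CompleteSpace K] [CharZero K]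
    (hna : IsNonarchimedean fun x : K => ‖x‖)
    (d : K → K) (hd : IsDerivation d) (hd0 : d ≠ 0) (hdb : IsBoundedMap d) :
    (∀ x y : K, taylor d (x + y) = taylor d x + taylor d y) ∧
      (∀ x y : K, taylor d (x * y) = taylor d x * taylor d y) ∧
      taylor d 1 = 1 ∧
      (∀ c : K, dX (taylor d c) = taylor d (d c)) ∧
      (∀ s : ℝ, s ∈ Set.Ioc 0 (radius d) → ∀ c : K,
        IsLUB (Set.range fun i : ℕ => ‖d^[i] c / (i.factorial : K)‖ * s ^ i) ‖c‖) ∧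
      ∀ (i : ℕ) (c : K), ‖d^[i] c / (i.factorial : K)‖ ≤ ‖c‖ / radius d ^ i := by
  obtain ⟨hω0, hω1, hωfac⟩ := omega_facts K hna
  have hsp0 : 0 ≤ spNormK d := spNormK_nonneg hdb
  have hsppos : 0 < spNormK d := by
    rcases eq_or_lt_of_le hsp0 with h | h
    · exfalso
      apply hd0
      funext c
      show d c = 0
      by_contra hdc
      have hdcpos : 0 < ‖d c‖ := norm_pos_iff.mpr hdc
      set s : ℝ := (‖c‖ + 1) / ‖d c‖ with hsdef
      have hs : 0 < s := div_pos (by positivity) hdcpos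
      have hsp : s * spNormK d < omegaK K := by
        rw [← h, mul_zero]; exact hω0
      have := main_bound hna hd hdb hs hsp c 1
      simp only [Function.iterate_one, Nat.factorial_one, Nat.cast_one, div_one,
        pow_one] at this
      rw [hsdef] at this
      have heq : ‖d c‖ * ((‖c‖ + 1) / ‖d c‖) = ‖c‖ + 1 := by
        field_simp
      rw [heq] at this
      linarith
    · exact h
  have hrad : radius d = omegaK K / spNormK d := rfl
  have hr0 : 0 < radius d := by rw [hrad]; exact div_pos hω0 hsppos
  have hrmul : radius d * spNormK d = omegaK K := by
    rw [hrad, div_mul_cancel₀ _ hsppos.ne']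
  have bound_at_r : ∀ (c : K) (k : ℕ),
      ‖d^[k] c / (k.factorial : K)‖ * radius d ^ k ≤ ‖c‖ := by
    intro c k
    have htend : Filter.Tendsto
        (fun t : ℝ => ‖d^[k] c / (k.factorial : K)‖ * (t * radius d) ^ k)
        (nhdsWithin 1 (Set.Iio 1)) (nhds (‖d^[k] c / (k.factorial : K)‖ * (1 * radius d) ^ k)) := by
      refine Filter.Tendsto.mono_left ?_ nhdsWithin_le_nhds
      exact (Continuous.tendsto (by continuity) 1)
    have hev : ∀ᶠ t in nhdsWithin 1 (Set.Iio 1),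
        ‖d^[k] c / (k.factorial : K)‖ * (t * radius d) ^ k ≤ ‖c‖ := by
      filter_upwards [Ioo_mem_nhdsLT_of_mem (Set.mem_Ioc.mpr ⟨one_pos, le_refl (1:ℝ)⟩)]
        with t ht
      have ht0 : 0 < t := ht.1
      have ht1 : t < 1 := ht.2
      have hs : 0 < t * radius d := mul_pos ht0 hr0
      have hsp : (t * radius d) * spNormK d < omegaK K := by
        rw [mul_assoc, hrmul]
        nlinarith
      exact main_bound hna hd hdb hs hsp c k
    have := le_of_tendsto htend hev
    rwa [one_mul] at this
  refine ⟨taylor_add hd, taylor_mul hd, taylor_one hd, dX_taylor hd, ?_, ?_⟩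
  · intro s hs c
    constructor
    · rintro x ⟨k, rfl⟩
      show ‖d^[k] c / (k.factorial : K)‖ * s ^ k ≤ ‖c‖
      calc ‖d^[k] c / (k.factorial : K)‖ * s ^ k
          ≤ ‖d^[k] c / (k.factorial : K)‖ * radius d ^ k := by
            refine mul_le_mul_of_nonneg_left ?_ (norm_nonneg _)
            exact pow_le_pow_left₀ hs.1.le hs.2 k
        _ ≤ ‖c‖ := bound_at_r c k
    · intro b hb
      have h0 : ‖c‖ ∈ Set.range fun i : ℕ => ‖d^[i] c / (i.factorial : K)‖ * s ^ i := by
        refine ⟨0, ?_⟩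
        simp
      exact hb h0
  · intro i c
    have := bound_at_r c i
    rw [le_div_iff₀ (pow_pos hr0 i)]
    exact this

end Ohkubo
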